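/- Let η > 0 be such that any perturbation of ℤ by less than η (coordinate-wise) remains a Riesz basis of exponentials for L²[0,1]. Then there exists a sequence Λ ⊆ ℤ such that E(Λ) is a Riesz basis of L²[0, η]. -/

import Mathlib

open MeasureTheory Complex
open scoped Real

/-- The exponential `e_λ(t) = e^{2πiλt}`. -/
noncomputable def expF (l t : ℝ) : ℂ := Complex.exp (2 * π * Complex.I * l * t)

/-- `E(Λ) = {e_λ}_{λ∈Λ}` is a Riesz basis of `L²(S)`: it is complete and satisfies
two-sided ℓ²-synthesis bounds on finitely supported coefficient sequences. -/
def IsExpRieszBasis (S : Set ℝ) (Λ : Set ℝ) : Prop :=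
  (∀ f : ℝ → ℂ, MemLp f 2 (volume.restrict S) →
      (∀ l : Λ, ∫ t in S, f t * Complex.exp (-(2 * π * Complex.I * (l : ℝ) * t)) = 0) →
      ∀ᵐ t ∂(volume.restrict S), f t = 0) ∧
  ∃ c C : ℝ, 0 < c ∧ 0 < C ∧ ∀ a : Λ →₀ ℂ,
    c * ∑ l ∈ a.support, ‖a l‖ ^ 2 ≤
        ∫ t in S, ‖∑ l ∈ a.support, a l * expF (l : ℝ) t‖ ^ 2 ∧
    (∫ t in S, ‖∑ l ∈ a.support, a l * expF (l : ℝ) t‖ ^ 2) ≤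
        C * ∑ l ∈ a.support, ‖a l‖ ^ 2


/-!
Dilating `[0, 1]` by `η` turns `L²[0,1]` into `L²[0,η]` (up to the factor `η` in the norm) and
the exponential `e_{ηλ}` into `e_λ`, so `E(Λ)` is a Riesz basis of `L²[0,η]` as soon as `E(ηΛ)` is
one of `L²[0,1]`. Taking `λ_n = round (n / η) ∈ ℤ`, the points `ηλ_n` lie within `η / 2` of `n`,
so `E(ηΛ)` is a Riesz basis of `L²[0,1]` by the stability hypothesis.
-/

theorem MeasureTheory.memLp_smul_measure_iff {α ε : Type*} [MeasurableSpace α]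
    [TopologicalSpace ε] [ENormedAddMonoid ε] {f : α → ε} {p : ENNReal} {μ : Measure α}
    {c : ENNReal} (hc0 : c ≠ 0) (hct : c ≠ ⊤) :
    MemLp f p (c • μ) ↔ MemLp f p μ := by
  refine ⟨fun h => ?_, fun h => h.smul_measure hct⟩
  simpa [smul_smul, ENNReal.inv_mul_cancel hc0 hct] using
    h.smul_measure (c := c⁻¹) (ENNReal.inv_ne_top.2 hc0)

section Dilation

variable {η : ℝ} (hη : η ≠ 0) (S : Set ℝ)
include hη

theorem map_restrict_volume_mul_left :
    (volume.restrict S).map (η * ·) = ENNReal.ofReal |η⁻¹| • volume.restrict ((η * ·) '' S) := by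
  have he := measurableEmbedding_mulLeft₀ hη
  rw [← Measure.restrict_smul, ← Real.map_volume_mul_left hη, he.restrict_map,
    Set.preimage_image_eq _ he.injective]

theorem setIntegral_comp_mul_left {E : Type*} [NormedAddCommGroup E] [NormedSpace ℝ E]
    (g : ℝ → E) :
    ∫ s in S, g (η * s) = |η⁻¹| • ∫ t in (η * ·) '' S, g t := by
  rw [← (measurableEmbedding_mulLeft₀ hη).integral_map, map_restrict_volume_mul_left hη,
    integral_smul_measure, ENNReal.toReal_ofReal (abs_nonneg _)]

theorem memLp_comp_mul_left_iff (f : ℝ → ℂ) :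
    MemLp (fun s => f (η * s)) 2 (volume.restrict S) ↔
      MemLp f 2 (volume.restrict ((η * ·) '' S)) := by
  rw [← memLp_smul_measure_iff (μ := volume.restrict (_ '' S)) (c := ENNReal.ofReal |η⁻¹|)
    (by simp [hη]) ENNReal.ofReal_ne_top, ← map_restrict_volume_mul_left hη,
    (measurableEmbedding_mulLeft₀ hη).memLp_map_measure_iff]
  rfl

theorem ae_comp_mul_left_iff (p : ℝ → Prop) :
    (∀ᵐ s ∂volume.restrict S, p (η * s)) ↔ ∀ᵐ t ∂volume.restrict ((η * ·) '' S), p t := by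
  rw [← (measurableEmbedding_mulLeft₀ hη).ae_map_iff, map_restrict_volume_mul_left hη,
    Measure.ae_ennreal_smul_measure_iff (by simp [hη])]

end Dilation

theorem expF_mul_left (η x t : ℝ) : expF (η * x) t = expF x (η * t) := by
  simp only [expF]
  push_cast
  ring_nf

theorem IsExpRieszBasis.of_image_mul_left {η : ℝ} (hη : η ≠ 0) {S Λ : Set ℝ}
    (h : IsExpRieszBasis S ((η * ·) '' Λ)) : IsExpRieszBasis ((η * ·) '' S) Λ := by
  obtain ⟨hcomplete, c, C, hc, hC, hbounds⟩ := h
  have hη' : 0 < |η| := abs_pos.2 hη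
  constructor
  · intro f hf horth
    refine (ae_comp_mul_left_iff hη S (f · = 0)).1 <|
      hcomplete _ ((memLp_comp_mul_left_iff hη S f).2 hf) ?_
    rintro ⟨_, x, hx, rfl⟩
    have := setIntegral_comp_mul_left hη S fun t => f t * exp (-(2 * π * I * x * t))
    rw [horth ⟨x, hx⟩, smul_zero] at this
    rw [← this]
    congr! 5 with s
    push_cast
    ring
  · refine ⟨|η| * c, |η| * C, by positivity, by positivity, fun a => ?_⟩
    let e : Λ ↪ ((η * ·) '' Λ) := (Equiv.Set.image _ Λ (mul_right_injective₀ hη)).toEmbedding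
    let b := a.embDomain e
    have hnorm : ∑ l ∈ b.support, ‖b l‖ ^ 2 = ∑ l ∈ a.support, ‖a l‖ ^ 2 :=
      Finsupp.sum_embDomain (g := fun _ z => ‖z‖ ^ 2)
    have hsynth (s : ℝ) :
        ∑ l ∈ b.support, b l * expF l s = ∑ l ∈ a.support, a l * expF l (η * s) := by
      simp only [← expF_mul_left]
      exact Finsupp.sum_embDomain (v := a) (f := e) (g := fun l z => z * expF l s)
    have hint : ∫ t in (η * ·) '' S, ‖∑ l ∈ a.support, a l * expF l t‖ ^ 2 =
        |η| * ∫ s in S, ‖∑ l ∈ b.support, b l * expF l s‖ ^ 2 := by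
      simp only [hsynth]
      rw [setIntegral_comp_mul_left hη S fun t => ‖∑ l ∈ a.support, a l * expF l t‖ ^ 2,
        smul_eq_mul, ← mul_assoc, abs_inv, mul_inv_cancel₀ hη'.ne', one_mul]
    obtain ⟨hlower, hupper⟩ := hbounds b
    rw [hnorm] at hlower hupper
    rw [hint, mul_assoc, mul_assoc]
    exact ⟨mul_le_mul_of_nonneg_left hlower hη'.le, mul_le_mul_of_nonneg_left hupper hη'.le⟩

theorem abs_mul_round_div_sub_le {η : ℝ} (hη : 0 < η) (x : ℝ) :
    |η * round (x / η) - x| ≤ η / 2 := by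
  have hround := abs_sub_round (x / η)
  rw [abs_sub_comm] at hround
  calc |η * round (x / η) - x| = η * |round (x / η) - x / η| := by
        rw [← abs_of_pos hη, ← abs_mul, abs_of_pos hη, mul_sub, mul_div_cancel₀ x hη.ne']
    _ ≤ η * (1 / 2) := mul_le_mul_of_nonneg_left hround hη.le
    _ = η / 2 := by ring

/-- If every coordinate-wise perturbation of `ℤ` by less than `η` remains a Riesz basis
of exponentials for `L²[0,1]`, then some `Λ ⊆ ℤ` gives a Riesz basis of `L²[0,η]`. -/
theorem riesz_basis_in_integers_for_short_interval (η : ℝ) (hη : 0 < η)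
    (hstab : ∀ Γ : ℤ → ℝ, (∀ n : ℤ, |Γ n - n| < η) →
      IsExpRieszBasis (Set.Icc 0 1) (Set.range Γ)) :
    ∃ Λ : Set ℝ, Λ ⊆ Set.range ((↑) : ℤ → ℝ) ∧
      IsExpRieszBasis (Set.Icc 0 η) Λ := by
  let Λ : Set ℝ := Set.range fun n : ℤ => (round (n / η) : ℝ)
  refine ⟨Λ, Set.range_comp_subset_range _ _, ?_⟩
  have hΓ : ∀ n : ℤ, |η * round (n / η) - n| < η := fun n =>
    (abs_mul_round_div_sub_le hη n).trans_lt (half_lt_self hη)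
  have hηΛ : IsExpRieszBasis (Set.Icc 0 1) ((η * ·) '' Λ) := by
    rw [← Set.range_comp]
    exact hstab _ hΓ
  have hΛ := hηΛ.of_image_mul_left hη.ne'
  rwa [Set.image_mul_left_Icc hη.le zero_le_one, mul_zero, mul_one] at hΛ
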